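/- arXiv:1210.6670 — 2 statements merged into one kernel-verified Lean document; each statement's English description precedes it below -/
import Mathlib

section
/- Let 𝔼 = (E_k)_{k∈ℕ₀} be an sc-Banach space. (a) If E₀ is finite-dimensional, then E_k = E₀ as sets for every k and all the norms ‖·‖_k are pairwise equivalent; in particular the only sc-structure on a finite-dimensional space is the trivial one. (b) Conversely, if E₁ = E₀ as sets, then E₀ is finite-dimensional. -/
/-!
(a) Inductively, if `E k` is finite dimensional then the range of `E (k+1) → E k` contains the
dense set of smooth points and, being a finite-dimensional subspace, is closed; so the inclusion
is onto and `E (k+1)` is finite dimensional as well. Norm equivalence is then automatic for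
injective linear maps out of finite-dimensional spaces.

(b) If `E 1 → E 0` is onto, the open mapping theorem sends a neighbourhood of a point of `E 1`
with compact closure in `E 0` to a neighbourhood in `E 0`, so `E 0` has a totally bounded
neighbourhood and is finite dimensional by Riesz's theorem.
-/

open Bornology Topology Filter

universe u

/-- The composite inclusion operator from level `j + d` down to level `j` of a scale of
Banach spaces with one-step inclusions `ι`. -/
def scInclDown (E : ℕ → Type u) [∀ k, NormedAddCommGroup (E k)] [∀ k, NormedSpace ℝ (E k)]
    (ι : ∀ k, E (k + 1) →ₗ[ℝ] E k) (j : ℕ) : (d : ℕ) → E (j + d) →ₗ[ℝ] E j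
  | 0 => LinearMap.id
  | d + 1 => (scInclDown E ι j d).comp (ι (j + d))

/-- The set of "smooth points" (i.e. points of `E_∞`) of the level `E j`. -/
def scSmoothSet (E : ℕ → Type u) [∀ k, NormedAddCommGroup (E k)] [∀ k, NormedSpace ℝ (E k)]
    (ι : ∀ k, E (k + 1) →ₗ[ℝ] E k) (j : ℕ) : Set (E j) :=
  {x | ∀ d : ℕ, ∃ y : E (j + d), scInclDown E ι j d y = x}

/-- `(E_k)` together with the inclusions `ι` is an sc-Banach space. -/
def IsScBanach (E : ℕ → Type u) [∀ k, NormedAddCommGroup (E k)] [∀ k, NormedSpace ℝ (E k)]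
    (ι : ∀ k, E (k + 1) →ₗ[ℝ] E k) : Prop :=
  (∀ k, Function.Injective (ι k)) ∧
  (∀ k, Continuous (ι k)) ∧
  (∀ k, CompleteSpace (E k)) ∧
  (∀ j d : ℕ, 0 < d → ∀ p : E (j + d),
    ∃ O ∈ 𝓝 p, IsCompact (closure (scInclDown E ι j d '' O))) ∧
  (∀ j, Dense (scSmoothSet E ι j))

open Function

section FiniteDimensional

variable {𝕜 F G : Type*} [NontriviallyNormedField 𝕜] [CompleteSpace 𝕜]
  [NormedAddCommGroup G] [NormedSpace 𝕜 G]

theorem LinearMap.surjective_of_denseRange [AddCommGroup F] [Module 𝕜 F]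
    [FiniteDimensional 𝕜 G] (f : F →ₗ[𝕜] G) (hf : DenseRange f) : Surjective f := by
  have hclosed : IsClosed (Set.range f) := by
    simpa only [LinearMap.coe_range] using (LinearMap.range f).closed_of_finiteDimensional
  exact Set.range_eq_univ.1 (hclosed.closure_eq ▸ hf.closure_range)

theorem LinearMap.exists_pos_mul_norm_le_and_norm_le_mul [NormedAddCommGroup F] [NormedSpace 𝕜 F]
    [FiniteDimensional 𝕜 F] (f : F →ₗ[𝕜] G) (hf : Injective f) :
    ∃ c C : ℝ, 0 < c ∧ ∀ x, c * ‖x‖ ≤ ‖f x‖ ∧ ‖f x‖ ≤ C * ‖x‖ := by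
  obtain ⟨K, hK, hanti⟩ := f.exists_antilipschitzWith (LinearMap.ker_eq_bot.2 hf)
  refine ⟨(K : ℝ)⁻¹, ‖LinearMap.toContinuousLinearMap f‖, by positivity, fun x => ⟨?_, ?_⟩⟩
  · rw [inv_mul_le_iff₀ (by exact_mod_cast hK)]
    exact hanti.le_mul_norm (map_zero f) x
  · exact (LinearMap.toContinuousLinearMap f).le_opNorm x

theorem FiniteDimensional.of_surjective_of_isCompact_closure_image [NormedAddCommGroup F]
    [NormedSpace 𝕜 F] [CompleteSpace F] [CompleteSpace G] (f : F →L[𝕜] G) (hf : Surjective f)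
    {O : Set F} {p : F} (hO : O ∈ 𝓝 p) (hc : IsCompact (closure (f '' O))) :
    FiniteDimensional 𝕜 G :=
  .of_exists_totallyBounded_nhds 𝕜
    ⟨f p, f '' O, (f.isOpenMap hf).image_mem_nhds hO, hc.totallyBounded.subset subset_closure⟩

end FiniteDimensional

section Scale

variable {E : ℕ → Type u} [∀ k, NormedAddCommGroup (E k)] [∀ k, NormedSpace ℝ (E k)]
  {ι : ∀ k, E (k + 1) →ₗ[ℝ] E k}

theorem scInclDown_injective (hι : ∀ k, Injective (ι k)) (j : ℕ) :
    ∀ d, Injective (scInclDown E ι j d)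
  | 0 => injective_id
  | d + 1 => (scInclDown_injective hι j d).comp (hι (j + d))

theorem scSmoothSet_subset_range (j : ℕ) : scSmoothSet E ι j ⊆ Set.range (ι j) :=
  fun _ hx => hx 1

theorem IsScBanach.denseRange (hsc : IsScBanach E ι) (j : ℕ) : DenseRange (ι j) :=
  (hsc.2.2.2.2 j).mono (scSmoothSet_subset_range j)

theorem IsScBanach.finiteDimensional_and_surjective_scInclDown (hsc : IsScBanach E ι) {j : ℕ}
    (hfd : FiniteDimensional ℝ (E j)) :
    ∀ d, FiniteDimensional ℝ (E (j + d)) ∧ Surjective (scInclDown E ι j d)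
  | 0 => ⟨hfd, surjective_id⟩
  | d + 1 => by
    obtain ⟨_, hsurj⟩ := hsc.finiteDimensional_and_surjective_scInclDown hfd d
    exact ⟨.of_injective (ι (j + d)) (hsc.1 (j + d)),
      hsurj.comp ((ι (j + d)).surjective_of_denseRange (hsc.denseRange (j + d)))⟩

end Scale

/-- **Statement 6**:
(a) If the bottom level `E 0` of an sc-Banach space is finite dimensional, then all the
inclusions `E k → E 0` are onto (so all levels agree as sets) and all the norms are
equivalent (it suffices to compare each level with level `0`).
(b) Conversely, if the one-step inclusion `E 1 → E 0` is onto, then `E 0` is finite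
dimensional. -/
theorem stmt6 (E : ℕ → Type u) [∀ k, NormedAddCommGroup (E k)] [∀ k, NormedSpace ℝ (E k)]
    (ι : ∀ k, E (k + 1) →ₗ[ℝ] E k) (hsc : IsScBanach E ι) :
    (FiniteDimensional ℝ (E 0) →
      ∀ k : ℕ, Function.Surjective (scInclDown E ι 0 k) ∧
        ∃ c C : ℝ, 0 < c ∧ ∀ x : E (0 + k),
          c * ‖x‖ ≤ ‖scInclDown E ι 0 k x‖ ∧ ‖scInclDown E ι 0 k x‖ ≤ C * ‖x‖) ∧
    (Function.Surjective (ι 0) → FiniteDimensional ℝ (E 0)) := by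
  refine ⟨fun hfd k => ?_, fun hsurj => ?_⟩
  · obtain ⟨hfdk, hsurjk⟩ := hsc.finiteDimensional_and_surjective_scInclDown hfd k
    exact ⟨hsurjk, (scInclDown E ι 0 k).exists_pos_mul_norm_le_and_norm_le_mul
      (scInclDown_injective hsc.1 0 k)⟩
  · have := hsc.2.2.1 0
    have := hsc.2.2.1 1
    obtain ⟨O, hO, hc⟩ := hsc.2.2.2.1 0 1 one_pos 0
    exact .of_surjective_of_isCompact_closure_image ⟨ι 0, hsc.2.1 0⟩ hsurj hO hc
end

section
/- Let 𝔼 and 𝔽 be sc-Banach spaces, let O ⊆ E₀ be an sc-retract, let f : O → F₀ be a map, and let k ∈ ℕ ∪ {∞}. If r : U → U and r′ : U′ → U′ are two sc-smooth retractions on open subsets of E₀ with r(U) = r′(U′) = O, then f ∘ r : U → 𝔽 is sc^k if and only if f ∘ r′ : U′ → 𝔽 is sc^k. Hence the notion 'f : O → 𝔽 is sc^k' (defined by requiring f ∘ r to be sc^k for some sc-smooth retraction r with image O) is independent of the choice of retraction. -/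
/-!
On `U'` the map `f ∘ r'` agrees with `(f ∘ r) ∘ r'`, because `r` is the identity on its image
`O = r'(U')`; so both directions follow from the chain rule for sc^m maps, applied to the
sc^∞ map `r'` and a representative of `f ∘ r`.

The chain rule is proved by induction on `m`, passing to tangent maps. Its analytic core is the
first-order estimate on level `0`. With `y = R x` and `k = R (x + h) - y` on level `1`, the mean
value theorem along the segment `[y, y + k]` bounds the error of `G` by the differences
`D_z G (d) - D_y G (d)`, where `ι k = ‖h‖ • d` and `d` is close to `D_x R (ι (h / ‖h‖))`. These
points `d` stay near a compact set because the inclusion of level `1` into level `0` is compact,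
so joint continuity of `(z, d) ↦ D_z G (d)` makes the differences uniformly small, although
`‖k‖` itself is not controlled by `‖h‖`.
-/

open Bornology Topology Filter

universe u v

/-- Composite inclusion from level `k` all the way down to level `0`. -/
def scDown0 (X : ℕ → Type u) [∀ k, NormedAddCommGroup (X k)] [∀ k, NormedSpace ℝ (X k)]
    (ιX : ∀ k, X (k + 1) →ₗ[ℝ] X k) : (k : ℕ) → X k →ₗ[ℝ] X 0
  | 0 => LinearMap.id
  | k + 1 => (scDown0 X ιX k).comp (ιX k)

section ScMapsOn

variable (X : ℕ → Type u) (Y : ℕ → Type v)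
  [∀ k, NormedAddCommGroup (X k)] [∀ k, NormedSpace ℝ (X k)]
  [∀ k, NormedAddCommGroup (Y k)] [∀ k, NormedSpace ℝ (Y k)]
  (ιX : ∀ k, X (k + 1) →ₗ[ℝ] X k) (ιY : ∀ k, Y (k + 1) →ₗ[ℝ] Y k)

/-- `f` is sc⁰ on the (relatively open) set `U ⊆ X 0`: on every level it preserves the
trace of `U` continuously. -/
def IsSc0On (U : Set (X 0)) (f : ∀ k, X k → Y k) : Prop :=
  (∀ k, ContinuousOn (f k) (scDown0 X ιX k ⁻¹' U)) ∧
  (∀ (k : ℕ) (x : X (k + 1)), scDown0 X ιX (k + 1) x ∈ U →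
    f k (ιX k x) = ιY k (f (k + 1) x))

/-- `Df` is sc¹-differential data for `f` on the open set `U ⊆ X 0`: `f` is sc⁰ on `U`;
at points of `U ∩ E_{k+1}` the differential is a bounded linear map `E_k → F_k`; the
tangent map `(x,h) ↦ D_x f (h)` is sc⁰; and at points of `U ∩ E₁` the difference
quotient (measured with the `E₁`-norm of `h`) converges. -/
def IsSc1DataOn (U : Set (X 0)) (f : ∀ k, X k → Y k)
    (Df : ∀ k, X (k + 1) → X k → Y k) : Prop :=
  IsSc0On X Y ιX ιY U f ∧
  (∀ (k : ℕ) (x : X (k + 1)), scDown0 X ιX (k + 1) x ∈ U →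
    IsLinearMap ℝ (Df k x) ∧ ∃ C : ℝ, ∀ h, ‖Df k x h‖ ≤ C * ‖h‖) ∧
  (∀ k : ℕ, ContinuousOn (fun p : X (k + 1) × X k => Df k p.1 p.2)
    {p | scDown0 X ιX (k + 1) p.1 ∈ U}) ∧
  (∀ (k : ℕ) (x : X (k + 2)) (h : X (k + 1)), scDown0 X ιX (k + 2) x ∈ U →
    Df k (ιX (k + 1) x) (ιX k h) = ιY k (Df (k + 1) x h)) ∧
  (∀ x : X 1, scDown0 X ιX 1 x ∈ U → ∀ ε > (0 : ℝ), ∃ δ > (0 : ℝ), ∀ h : X 1,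
    ‖h‖ ≤ δ → scDown0 X ιX 1 (x + h) ∈ U →
    ‖f 0 (ιX 0 (x + h)) - f 0 (ιX 0 x) - Df 0 x (ιX 0 h)‖ ≤ ε * ‖h‖)

end ScMapsOn

/-- `f` is sc^m on the open set `U`, defined recursively: sc^{m+1} means the existence
of sc¹-differential data together with the tangent map `Tf(x,h) = (f x, D_x f h)` being
sc^m on the tangent set `TU = (U ∩ E₁) × E₀ ⊆ E₁ × E₀`. -/
def IsScNOn (m : ℕ) (X : ℕ → Type u) (Y : ℕ → Type v)
    [∀ k, NormedAddCommGroup (X k)] [∀ k, NormedSpace ℝ (X k)]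
    [∀ k, NormedAddCommGroup (Y k)] [∀ k, NormedSpace ℝ (Y k)]
    (ιX : ∀ k, X (k + 1) →ₗ[ℝ] X k) (ιY : ∀ k, Y (k + 1) →ₗ[ℝ] Y k)
    (U : Set (X 0)) (f : ∀ k, X k → Y k) : Prop :=
  match m with
  | 0 => IsSc0On X Y ιX ιY U f
  | m + 1 => ∃ Df : ∀ k, X (k + 1) → X k → Y k,
      IsSc1DataOn X Y ιX ιY U f Df ∧
      IsScNOn m (fun k => X (k + 1) × X k) (fun k => Y (k + 1) × Y k)
        (fun k => (ιX (k + 1)).prodMap (ιX k)) (fun k => (ιY (k + 1)).prodMap (ιY k))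
        {p : X 1 × X 0 | scDown0 X ιX 1 p.1 ∈ U}
        (fun k p => (f (k + 1) p.1, Df k p.1 p.2))

/-- An sc-smooth retraction on the sc-Banach space `(X, ιX)`: an sc^∞ map defined on an
open subset `U` of the level `0`, mapping `U` to itself and satisfying `r ∘ r = r`. -/
def IsScRetractionOn (X : ℕ → Type u)
    [∀ k, NormedAddCommGroup (X k)] [∀ k, NormedSpace ℝ (X k)]
    (ιX : ∀ k, X (k + 1) →ₗ[ℝ] X k) (U : Set (X 0)) (r : ∀ k, X k → X k) : Prop :=
  IsOpen U ∧ Set.MapsTo (r 0) U U ∧ (∀ x ∈ U, r 0 (r 0 x) = r 0 x) ∧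
  (∀ m : ℕ, IsScNOn m X X ιX ιX U r)

/-- `g : X 0 → Y 0` "is sc^m on `U` as a map of scales": some family of level maps
agreeing with `g` on `U` at level `0` is sc^m on `U`. -/
def IsScNOnAs (m : ℕ) (X : ℕ → Type u) (Y : ℕ → Type v)
    [∀ k, NormedAddCommGroup (X k)] [∀ k, NormedSpace ℝ (X k)]
    [∀ k, NormedAddCommGroup (Y k)] [∀ k, NormedSpace ℝ (Y k)]
    (ιX : ∀ k, X (k + 1) →ₗ[ℝ] X k) (ιY : ∀ k, Y (k + 1) →ₗ[ℝ] Y k)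
    (U : Set (X 0)) (g : X 0 → Y 0) : Prop :=
  ∃ G : ∀ k, X k → Y k, (∀ x ∈ U, G 0 x = g x) ∧ IsScNOn m X Y ιX ιY U G

lemma exists_dist_le_of_continuousOn_fst_preimage {P Q E : Type*} [PseudoMetricSpace P]
    [PseudoMetricSpace Q] [PseudoMetricSpace E] {W : Set P} (hW : IsOpen W)
    {T : P × Q → E} (hT : ContinuousOn T (Prod.fst ⁻¹' W)) {y : P} (hy : y ∈ W)
    {K : Set Q} (hK : IsCompact K) {ε : ℝ} (hε : 0 < ε) :
    ∃ δ > 0, ∀ z d, ∀ e ∈ K, dist z y ≤ δ → dist d e ≤ δ →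
      dist (T (z, d)) (T (y, d)) < ε := by
  set F := fun p : P × Q => dist (T p) (T (y, p.2))
  have hF : ContinuousOn F (Prod.fst ⁻¹' W) :=
    continuous_dist.comp_continuousOn
      (hT.prodMk (hT.comp (continuous_const.prodMk continuous_snd).continuousOn fun _ _ => hy))
  have hsub : {y} ×ˢ K ⊆ Prod.fst ⁻¹' W ∩ F ⁻¹' Set.Iio ε := by
    rintro ⟨_, e⟩ ⟨rfl, -⟩
    exact ⟨hy, by simp [F, hε]⟩
  obtain ⟨δ, hδ, hδsub⟩ := (isCompact_singleton.prod hK).exists_cthickening_subset_open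
    (hF.isOpen_inter_preimage (hW.preimage continuous_fst) isOpen_Iio) hsub
  refine ⟨δ, hδ, fun z d e he hz hd => (hδsub ?_).2⟩
  exact Metric.mem_cthickening_of_dist_le (z, d) (y, e) _ _ ⟨rfl, he⟩
    (by rw [Prod.dist_eq]; exact max_le hz hd)

lemma IsCompactOperator.prodMap {M₁ M₂ N₁ N₂ : Type*} [Zero M₁] [Zero M₂]
    [TopologicalSpace M₁] [TopologicalSpace M₂] [TopologicalSpace N₁] [TopologicalSpace N₂]
    {f : M₁ → N₁} {g : M₂ → N₂} (hf : IsCompactOperator f) (hg : IsCompactOperator g) :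
    IsCompactOperator (Prod.map f g) := by
  obtain ⟨K, hK, hKf⟩ := hf
  obtain ⟨L, hL, hLg⟩ := hg
  exact ⟨K ×ˢ L, hK.prod hL, prod_mem_nhds hKf hLg⟩

lemma IsScBanach.isCompactOperator {E : ℕ → Type*} [∀ k, NormedAddCommGroup (E k)]
    [∀ k, NormedSpace ℝ (E k)] {ι : ∀ k, E (k + 1) →ₗ[ℝ] E k} (hE : IsScBanach E ι) (k : ℕ) :
    IsCompactOperator (ι k) := by
  obtain ⟨O, hO, hOc⟩ := hE.2.2.2.1 k 1 one_pos 0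
  exact ⟨_, hOc, Filter.mem_of_superset hO fun x hx => subset_closure ⟨x, hx, rfl⟩⟩

lemma exists_continuousLinearMap_eq_of_isLinearMap {E F : Type*} [NormedAddCommGroup E]
    [NormedSpace ℝ E] [NormedAddCommGroup F] [NormedSpace ℝ F] {g : E → F}
    (hlin : IsLinearMap ℝ g) (hbd : ∃ C, ∀ h, ‖g h‖ ≤ C * ‖h‖) : ∃ L : E →L[ℝ] F, ⇑L = g :=
  ⟨(hlin.mk' g).mkContinuousOfExistsBound hbd, rfl⟩

section ScCalculus

variable {A B C : ℕ → Type*}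
  [∀ k, NormedAddCommGroup (A k)] [∀ k, NormedSpace ℝ (A k)]
  [∀ k, NormedAddCommGroup (B k)] [∀ k, NormedSpace ℝ (B k)]
  [∀ k, NormedAddCommGroup (C k)] [∀ k, NormedSpace ℝ (C k)]
  {ιA : ∀ k, A (k + 1) →ₗ[ℝ] A k} {ιB : ∀ k, B (k + 1) →ₗ[ℝ] B k}
  {ιC : ∀ k, C (k + 1) →ₗ[ℝ] C k}
  {U : Set (A 0)} {V : Set (B 0)}

lemma IsSc0On.scDown0_apply {f : ∀ k, A k → B k} (hf : IsSc0On A B ιA ιB U f) {k : ℕ}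
    {x : A k} (hx : scDown0 A ιA k x ∈ U) :
    scDown0 B ιB k (f k x) = f 0 (scDown0 A ιA k x) := by
  induction k with
  | zero => rfl
  | succ k ih =>
    change scDown0 B ιB k (ιB k (f (k + 1) x)) = f 0 (scDown0 A ιA k (ιA k x))
    rw [← hf.2 k x hx]
    exact ih hx

lemma IsSc0On.scDown0_mem {R : ∀ k, A k → B k} (hR : IsSc0On A B ιA ιB U R)
    (hmaps : Set.MapsTo (R 0) U V) {k : ℕ} {x : A k} (hx : scDown0 A ιA k x ∈ U) :
    scDown0 B ιB k (R k x) ∈ V := by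
  rw [hR.scDown0_apply hx]
  exact hmaps hx

lemma IsSc0On.comp {R : ∀ k, A k → B k} {G : ∀ k, B k → C k}
    (hG : IsSc0On B C ιB ιC V G) (hR : IsSc0On A B ιA ιB U R)
    (hmaps : Set.MapsTo (R 0) U V) :
    IsSc0On A C ιA ιC U (fun k => G k ∘ R k) := by
  refine ⟨fun k => (hG.1 k).comp (hR.1 k) fun x hx => hR.scDown0_mem hmaps hx,
    fun k x hx => ?_⟩
  change G k (R k (ιA k x)) = ιC k (G (k + 1) (R (k + 1) x))
  rw [hR.2 k x hx]
  exact hG.2 k _ (hR.scDown0_mem hmaps (k := k + 1) hx)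

lemma IsSc1DataOn.exists_continuousLinearMap {f : ∀ k, A k → B k}
    {Df : ∀ k, A (k + 1) → A k → B k} (hf : IsSc1DataOn A B ιA ιB U f Df) {k : ℕ}
    {x : A (k + 1)} (hx : scDown0 A ιA (k + 1) x ∈ U) :
    ∃ L : A k →L[ℝ] B k, ⇑L = Df k x :=
  exists_continuousLinearMap_eq_of_isLinearMap (hf.2.1 k x hx).1 (hf.2.1 k x hx).2

lemma IsSc1DataOn.hasFDerivAt {G : ∀ k, B k → C k} {DG : ∀ k, B (k + 1) → B k → C k}
    (hG : IsSc1DataOn B C ιB ιC V G DG) (hV : IsOpen V) (hι : Continuous (ιB 0))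
    {z : B 1} (hz : ιB 0 z ∈ V) {L : B 0 →L[ℝ] C 0} (hL : ⇑L = DG 0 z) :
    HasFDerivAt (fun w => G 0 (ιB 0 w)) (L.comp ⟨ιB 0, hι⟩) z := by
  rw [hasFDerivAt_iff_isLittleO_nhds_zero, Asymptotics.isLittleO_iff]
  intro c hc
  obtain ⟨δ, hδ, hquot⟩ := hG.2.2.2.2 z hz c hc
  have hmem : {h : B 1 | ιB 0 (z + h) ∈ V} ∈ 𝓝 (0 : B 1) :=
    (hV.preimage (hι.comp (continuous_const_add z))).mem_nhds (by simpa using hz)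
  filter_upwards [Metric.closedBall_mem_nhds (0 : B 1) hδ, hmem] with h hh hhV
  rw [mem_closedBall_zero_iff] at hh
  simpa [hL] using hquot h hh hhV

lemma IsSc1DataOn.exists_norm_sub_sub_le {G : ∀ k, B k → C k}
    {DG : ∀ k, B (k + 1) → B k → C k} (hG : IsSc1DataOn B C ιB ιC V G DG) (hV : IsOpen V)
    (hι : Continuous (ιB 0)) {y : B 1} (hy : ιB 0 y ∈ V) {K : Set (B 0)} (hK : IsCompact K)
    {ε : ℝ} (hε : 0 < ε) :
    ∃ δ > 0, ∀ (k : B 1) (s : ℝ), ∀ e ∈ K, 0 < s → ‖k‖ ≤ δ → ‖ιB 0 k - s • e‖ ≤ s * δ →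
      ‖G 0 (ιB 0 (y + k)) - G 0 (ιB 0 y) - DG 0 y (ιB 0 k)‖ ≤ ε * s := by
  have hW : IsOpen (ιB 0 ⁻¹' V) := hV.preimage hι
  obtain ⟨ρ, hρ, hball⟩ := Metric.isOpen_iff.1 hW y hy
  obtain ⟨δ, hδ, hT⟩ := exists_dist_le_of_continuousOn_fst_preimage hW (hG.2.2.1 0) hy hK hε
  refine ⟨min δ (ρ / 2), by positivity, fun k s e he hs hk hke => ?_⟩
  have hseg : ∀ t ∈ Set.Icc (0 : ℝ) 1, dist (y + t • k) y ≤ min δ (ρ / 2) := fun t ht => by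
    rw [dist_eq_norm, add_sub_cancel_left, norm_smul, Real.norm_of_nonneg ht.1]
    exact (mul_le_of_le_one_left (norm_nonneg k) ht.2).trans hk
  have hsegV : ∀ t ∈ Set.Icc (0 : ℝ) 1, ιB 0 (y + t • k) ∈ V := fun t ht =>
    hball (lt_of_le_of_lt ((hseg t ht).trans (min_le_right _ _)) (half_lt_self hρ))
  set d := s⁻¹ • ιB 0 k
  have hkd : ιB 0 k = s • d := by rw [smul_inv_smul₀ hs.ne']
  have hde : dist d e ≤ δ := by
    rw [dist_eq_norm, ← inv_smul_smul₀ hs.ne' e, ← smul_sub, norm_smul, norm_inv,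
      Real.norm_of_nonneg hs.le, inv_mul_le_iff₀ hs]
    exact hke.trans (mul_le_mul_of_nonneg_left (min_le_left _ _) hs.le)
  have hderiv : ∀ t ∈ Set.Icc (0 : ℝ) 1,
      HasDerivWithinAt (fun t : ℝ => G 0 (ιB 0 (y + t • k)) - t • DG 0 y (ιB 0 k))
        (DG 0 (y + t • k) (ιB 0 k) - DG 0 y (ιB 0 k)) (Set.Icc 0 1) t := by
    intro t ht
    obtain ⟨L, hL⟩ := hG.exists_continuousLinearMap (k := 0) (hsegV t ht)
    have hline : HasDerivAt (fun s : ℝ => y + s • k) k t := by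
      simpa using ((hasDerivAt_id t).smul_const k).const_add y
    have := ((hG.hasFDerivAt hV hι (hsegV t ht) hL).comp_hasDerivAt t hline).sub
      ((hasDerivAt_id t).smul_const (DG 0 y (ιB 0 k)))
    rw [← hL]
    exact (this.congr_deriv (by rw [one_smul]; rfl)).hasDerivWithinAt
  have hbound : ∀ t ∈ Set.Ico (0 : ℝ) 1,
      ‖DG 0 (y + t • k) (ιB 0 k) - DG 0 y (ιB 0 k)‖ ≤ ε * s := by
    intro t ht
    have htI : t ∈ Set.Icc (0 : ℝ) 1 := Set.Ico_subset_Icc_self ht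
    rw [hkd, (hG.2.1 0 _ (hsegV t htI)).1.map_smul, (hG.2.1 0 _ hy).1.map_smul, ← smul_sub,
      norm_smul, Real.norm_of_nonneg hs.le, mul_comm, ← dist_eq_norm]
    exact mul_le_mul_of_nonneg_right
      (hT _ _ e he ((hseg t htI).trans (min_le_left _ _)) hde).le hs.le
  have := norm_image_sub_le_of_norm_deriv_le_segment_01' hderiv hbound
  simp only [one_smul, zero_smul, add_zero, sub_zero] at this
  rwa [sub_right_comm] at this

lemma IsSc1DataOn.exists_increment_le {R : ∀ k, A k → B k}
    {DR : ∀ k, A (k + 1) → A k → B k} (hR : IsSc1DataOn A B ιA ιB U R DR) {x : A 1}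
    (hx : ιA 0 x ∈ U) {ρ η : ℝ} (hρ : 0 < ρ) (hη : 0 < η) :
    ∃ δ > 0, ∀ h : A 1, ‖h‖ ≤ δ → ιA 0 (x + h) ∈ U →
      ‖R 1 (x + h) - R 1 x‖ ≤ ρ ∧ ‖ιB 0 (R 1 (x + h) - R 1 x) - DR 0 x (ιA 0 h)‖ ≤ η * ‖h‖ := by
  obtain ⟨δ₁, hδ₁, hquot⟩ := hR.2.2.2.2 x hx η hη
  obtain ⟨δ₂, hδ₂, hcont⟩ := Metric.continuousWithinAt_iff.1 (hR.1.1 1 x hx) ρ hρ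
  refine ⟨min δ₁ (δ₂ / 2), by positivity, fun h hh hxh => ⟨?_, ?_⟩⟩
  · rw [← dist_eq_norm]
    refine (hcont hxh ?_).le
    rw [dist_eq_norm, add_sub_cancel_left]
    exact (hh.trans (min_le_right _ _)).trans_lt (half_lt_self hδ₂)
  · rw [map_sub, ← hR.1.2 0 _ hxh, ← hR.1.2 0 _ hx]
    exact hquot h (hh.trans (min_le_left _ _)) hxh

lemma IsSc1DataOn.comp_quotient {R : ∀ k, A k → B k} {G : ∀ k, B k → C k}
    {DR : ∀ k, A (k + 1) → A k → B k} {DG : ∀ k, B (k + 1) → B k → C k}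
    (hG : IsSc1DataOn B C ιB ιC V G DG) (hR : IsSc1DataOn A B ιA ιB U R DR)
    (hmaps : Set.MapsTo (R 0) U V) (hV : IsOpen V) (hιA : IsCompactOperator (ιA 0))
    (hιB : Continuous (ιB 0)) {x : A 1} (hx : ιA 0 x ∈ U) {ε : ℝ} (hε : 0 < ε) :
    ∃ δ > 0, ∀ h : A 1, ‖h‖ ≤ δ → ιA 0 (x + h) ∈ U →
      ‖G 0 (R 0 (ιA 0 (x + h))) - G 0 (R 0 (ιA 0 x)) - DG 0 (R 1 x) (DR 0 x (ιA 0 h))‖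
        ≤ ε * ‖h‖ := by
  set y := R 1 x
  have hy : ιB 0 y ∈ V := hR.1.scDown0_mem hmaps (k := 1) hx
  obtain ⟨LR, hLR⟩ := hR.exists_continuousLinearMap (k := 0) hx
  obtain ⟨LG, hLG⟩ := hG.exists_continuousLinearMap (k := 0) hy
  obtain ⟨K, hK, hιK⟩ := hιA.image_closedBall_subset_compact 1
  obtain ⟨ρ, hρ, hcore⟩ :=
    hG.exists_norm_sub_sub_le hV hιB hy (hK.image LR.continuous) (half_pos hε)
  set η := min ρ (ε / 2 / (‖LG‖ + 1))
  have hLGη : ‖LG‖ * η ≤ ε / 2 :=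
    calc ‖LG‖ * η ≤ (‖LG‖ + 1) * (ε / 2 / (‖LG‖ + 1)) := by
          gcongr
          · linarith
          · exact min_le_right _ _
      _ = ε / 2 := by field_simp
  obtain ⟨δ, hδ, hinc⟩ := hR.exists_increment_le hx hρ (show 0 < η by positivity)
  refine ⟨δ, hδ, fun h hh hxh => ?_⟩
  rcases eq_or_ne h 0 with rfl | hh0
  · simp [← hLR, ← hLG]
  have hhpos : 0 < ‖h‖ := norm_pos_iff.2 hh0
  obtain ⟨hk, hkR⟩ := hinc h hh hxh
  set k := R 1 (x + h) - y
  rw [← hLR] at hkR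
  have he : LR (ιA 0 (‖h‖⁻¹ • h)) ∈ LR '' K := by
    refine Set.mem_image_of_mem _ (hιK ⟨_, ?_, rfl⟩)
    rw [mem_closedBall_zero_iff, norm_smul, norm_inv, norm_norm, inv_mul_cancel₀ hhpos.ne']
  have hfirst : ‖G 0 (ιB 0 (y + k)) - G 0 (ιB 0 y) - LG (ιB 0 k)‖ ≤ ε / 2 * ‖h‖ := by
    rw [hLG]
    refine hcore k ‖h‖ _ he hhpos hk ?_
    rw [map_smul, map_smul, smul_inv_smul₀ hhpos.ne', mul_comm]
    exact hkR.trans (mul_le_mul_of_nonneg_right (min_le_left _ _) hhpos.le)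
  have hsecond : ‖LG (ιB 0 k - LR (ιA 0 h))‖ ≤ ε / 2 * ‖h‖ := by
    refine (LG.le_opNorm_of_le hkR).trans ?_
    rw [← mul_assoc]
    exact mul_le_mul_of_nonneg_right hLGη hhpos.le
  have hsplit : G 0 (R 0 (ιA 0 (x + h))) - G 0 (R 0 (ιA 0 x)) - DG 0 y (DR 0 x (ιA 0 h)) =
      (G 0 (ιB 0 (y + k)) - G 0 (ιB 0 y) - LG (ιB 0 k)) + LG (ιB 0 k - LR (ιA 0 h)) := by
    rw [← hLR, ← hLG, add_sub_cancel, ← hR.1.2 0 _ hxh, ← hR.1.2 0 _ hx, map_sub LG]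
    abel
  rw [hsplit]
  exact (norm_add_le_of_le hfirst hsecond).trans_eq (by ring)

lemma IsSc1DataOn.comp {R : ∀ k, A k → B k} {G : ∀ k, B k → C k}
    {DR : ∀ k, A (k + 1) → A k → B k} {DG : ∀ k, B (k + 1) → B k → C k}
    (hG : IsSc1DataOn B C ιB ιC V G DG) (hR : IsSc1DataOn A B ιA ιB U R DR)
    (hmaps : Set.MapsTo (R 0) U V) (hV : IsOpen V) (hιA : IsCompactOperator (ιA 0))
    (hιB : Continuous (ιB 0)) :
    IsSc1DataOn A C ιA ιC U (fun k => G k ∘ R k)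
      (fun k x h => DG k (R (k + 1) x) (DR k x h)) := by
  have hdown {k : ℕ} {x : A k} (hx : scDown0 A ιA k x ∈ U) : scDown0 B ιB k (R k x) ∈ V :=
    hR.1.scDown0_mem hmaps hx
  refine ⟨hG.1.comp hR.1 hmaps, fun k x hx => ?_, fun k => ?_, fun k x h hx => ?_,
    fun x hx ε hε => hG.comp_quotient hR hmaps hV hιA hιB hx hε⟩
  · obtain ⟨LR, hLR⟩ := hR.exists_continuousLinearMap hx
    obtain ⟨LG, hLG⟩ := hG.exists_continuousLinearMap (hdown (k := k + 1) hx)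
    beta_reduce
    rw [← hLR, ← hLG]
    exact ⟨(LG.comp LR).toLinearMap.isLinear, ‖LG.comp LR‖, (LG.comp LR).le_opNorm⟩
  · have hT : ContinuousOn (fun p : A (k + 1) × A k => (R (k + 1) p.1, DR k p.1 p.2))
        {p | scDown0 A ιA (k + 1) p.1 ∈ U} :=
      ((hR.1.1 (k + 1)).comp continuousOn_fst fun _ hp => hp).prodMk (hR.2.2.1 k)
    exact (hG.2.2.1 k).comp hT fun p hp => hdown hp
  · change DG k (R (k + 1) (ιA (k + 1) x)) (DR k (ιA (k + 1) x) (ιA k h)) =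
      ιC k (DG (k + 1) (R (k + 2) x) (DR (k + 1) x h))
    rw [hR.1.2 (k + 1) x hx, hR.2.2.2.1 k x h hx]
    exact hG.2.2.2.1 k _ _ (hdown (k := k + 2) hx)

theorem IsScNOn.comp (m : ℕ) {R : ∀ k, A k → B k} {G : ∀ k, B k → C k}
    (hG : IsScNOn m B C ιB ιC V G) (hR : IsScNOn m A B ιA ιB U R)
    (hmaps : Set.MapsTo (R 0) U V) (hV : IsOpen V) (hιA : ∀ k, IsCompactOperator (ιA k))
    (hιB : ∀ k, Continuous (ιB k)) :
    IsScNOn m A C ιA ιC U (fun k => G k ∘ R k) := by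
  induction m generalizing A B C with
  | zero => exact IsSc0On.comp hG hR hmaps
  | succ m ih =>
    obtain ⟨DR, hRdata, hRT⟩ := hR
    obtain ⟨DG, hGdata, hGT⟩ := hG
    exact ⟨_, hGdata.comp hRdata hmaps hV (hιA 0) (hιB 0),
      ih hGT hRT (fun p hp => hRdata.1.scDown0_mem hmaps (k := 1) hp)
        (hV.preimage ((hιB 0).comp continuous_fst))
        (fun k => (hιA (k + 1)).prodMap (hιA k))
        (fun k => (hιB (k + 1)).prodMap (hιB k))⟩

end ScCalculus

section Retraction

variable {X : ℕ → Type*} {Y : ℕ → Type*}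
  [∀ k, NormedAddCommGroup (X k)] [∀ k, NormedSpace ℝ (X k)]
  [∀ k, NormedAddCommGroup (Y k)] [∀ k, NormedSpace ℝ (Y k)]
  {ιX : ∀ k, X (k + 1) →ₗ[ℝ] X k} {ιY : ∀ k, Y (k + 1) →ₗ[ℝ] Y k}
  {U U' : Set (X 0)} {r r' : ∀ k, X k → X k}

lemma IsScRetractionOn.apply_eq_self_of_mem_image (hr : IsScRetractionOn X ιX U r)
    {y : X 0} (hy : y ∈ r 0 '' U) : r 0 y = y := by
  obtain ⟨x, hx, rfl⟩ := hy
  exact hr.2.2.1 x hx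

lemma IsScNOnAs.comp_retraction_of_image_eq {m : ℕ} {f : X 0 → Y 0}
    (h : IsScNOnAs m X Y ιX ιY U (fun x => f (r 0 x))) (hX : IsScBanach X ιX)
    (hr : IsScRetractionOn X ιX U r) (hr' : IsScRetractionOn X ιX U' r')
    (him : r 0 '' U = r' 0 '' U') :
    IsScNOnAs m X Y ιX ιY U' (fun x => f (r' 0 x)) := by
  obtain ⟨G, hG0, hG⟩ := h
  have hO {z : X 0} (hz : z ∈ U') : r' 0 z ∈ r 0 '' U := him ▸ Set.mem_image_of_mem _ hz
  have hmaps : Set.MapsTo (r' 0) U' U := fun z hz => hr.2.1.image_subset (hO hz)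
  refine ⟨fun k => G k ∘ r' k, fun z hz => ?_,
    hG.comp m (hr'.2.2.2 m) hmaps hr.1 hX.isCompactOperator hX.2.1⟩
  change G 0 (r' 0 z) = f (r' 0 z)
  rw [hG0 _ (hmaps hz)]
  exact congrArg f (hr.apply_eq_self_of_mem_image (hO hz))

end Retraction

theorem stmt15_general (X : ℕ → Type u) (Y : ℕ → Type v)
    [∀ k, NormedAddCommGroup (X k)] [∀ k, NormedSpace ℝ (X k)]
    [∀ k, NormedAddCommGroup (Y k)] [∀ k, NormedSpace ℝ (Y k)]
    (ιX : ∀ k, X (k + 1) →ₗ[ℝ] X k) (ιY : ∀ k, Y (k + 1) →ₗ[ℝ] Y k)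
    (hscX : IsScBanach X ιX)
    (U U' : Set (X 0)) (r r' : ∀ k, X k → X k)
    (hr : IsScRetractionOn X ιX U r) (hr' : IsScRetractionOn X ιX U' r')
    (him : r 0 '' U = r' 0 '' U')
    (f : X 0 → Y 0) :
    ∀ m : ℕ,
      IsScNOnAs m X Y ιX ιY U (fun x => f (r 0 x)) ↔
      IsScNOnAs m X Y ιX ιY U' (fun x => f (r' 0 x)) :=
  fun _ => ⟨fun h => h.comp_retraction_of_image_eq hscX hr hr' him,
    fun h => h.comp_retraction_of_image_eq hscX hr' hr him.symm⟩

/-- **Statement 15** (Lemma 4.15 of the paper): for two sc-smooth retractions `r`, `r'`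
with the same image `O` and any map `f` defined on `O` (with values in the sc-Banach
space `𝔽`), the composition `f ∘ r : U → 𝔽` is sc^k if and only if `f ∘ r' : U' → 𝔽`
is sc^k; hence the notion "`f : O → 𝔽` is sc^k" is independent of the choice of
retraction.  (The case `k = ∞` is the conjunction over all `k ∈ ℕ`.) -/
theorem stmt15 (X : ℕ → Type u) (Y : ℕ → Type v)
    [∀ k, NormedAddCommGroup (X k)] [∀ k, NormedSpace ℝ (X k)]
    [∀ k, NormedAddCommGroup (Y k)] [∀ k, NormedSpace ℝ (Y k)]
    (ιX : ∀ k, X (k + 1) →ₗ[ℝ] X k) (ιY : ∀ k, Y (k + 1) →ₗ[ℝ] Y k)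
    (hscX : IsScBanach X ιX) (hscY : IsScBanach Y ιY)
    (U U' : Set (X 0)) (r r' : ∀ k, X k → X k)
    (hr : IsScRetractionOn X ιX U r) (hr' : IsScRetractionOn X ιX U' r')
    (him : r 0 '' U = r' 0 '' U')
    (f : X 0 → Y 0) :
    ∀ m : ℕ,
      IsScNOnAs m X Y ιX ιY U (fun x => f (r 0 x)) ↔
      IsScNOnAs m X Y ιX ιY U' (fun x => f (r' 0 x)) :=
  stmt15_general X Y ιX ιY hscX U U' r r' hr hr' him f
end
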